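/- Let (S, X, V) be jointly distributed random variables on finite sets such that S and X are conditionally independent given V. Then the total variation distance between the joint distribution (S, X) and the product of its marginals S ⊗ X is at most E_{s∼S}[dTV(V | S=s, V)], and hence at most √(I(S;V)/2). -/

import Mathlib

open Finset

def IsDist {α : Type*} [Fintype α] (p : α → ℝ) : Prop :=
  (∀ x, 0 ≤ p x) ∧ ∑ x, p x = 1

noncomputable def dTV {α : Type*} [Fintype α] (p q : α → ℝ) : ℝ :=
  (1 / 2) * ∑ x, |p x - q x|

noncomputable def mutualInfo {α β : Type*} [Fintype α] [Fintype β]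
    (j : α × β → ℝ) : ℝ :=
  ∑ p : α × β,
    if j p = 0 then 0
    else j p * Real.log (j p / ((∑ b, j (p.1, b)) * (∑ a, j (a, p.2))))

/-!
Let `K(x | v)` be the law of `X` given `V`. Conditional independence says that the law of
`(S, X)` is the law of `(S, V)` pushed through `K` in the second coordinate, and `S ⊗ X` is
`S ⊗ V` pushed through the same kernel. A kernel does not increase total variation, and
splitting the sum over `s` gives `dTV((S, V), S ⊗ V) = E_s[dTV(V | S=s, V)]`. Pinsker's
inequality for `(S, V)` against `S ⊗ V`, whose relative entropy is `I(S;V)`, then gives the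
square root bound; Pinsker itself follows from Cauchy–Schwarz and the pointwise bound
`3 (t - 1)² ≤ (2t + 4) (t log t - t + 1)`.
-/

open Real InformationTheory

lemma le_of_hasDerivAt_of_sub_mul_nonneg {f f' : ℝ → ℝ} {a c t : ℝ}
    (hc : a < c) (ht : a < t)
    (hf : ∀ x, a < x → HasDerivAt f (f' x) x) (hsign : ∀ x, a < x → 0 ≤ (x - c) * f' x) :
    f c ≤ f t := by
  have hcont : ∀ D ⊆ Set.Ioi a, ContinuousOn f D := fun D hD x hx =>
    (hf x (hD hx)).continuousAt.continuousWithinAt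
  rcases le_total c t with hct | htc
  · refine monotoneOn_of_hasDerivWithinAt_nonneg (f' := f') (convex_Icc c t)
      (hcont _ fun x hx => hc.trans_le hx.1) (fun x hx => ?_) (fun x hx => ?_)
      ⟨le_rfl, hct⟩ ⟨hct, le_rfl⟩ hct
    all_goals rw [interior_Icc] at hx
    · exact (hf x (hc.trans hx.1)).hasDerivWithinAt
    · exact nonneg_of_mul_nonneg_right (hsign x (hc.trans hx.1)) (sub_pos.2 hx.1)
  · refine antitoneOn_of_hasDerivWithinAt_nonpos (f' := f') (convex_Icc t c)
      (hcont _ fun x hx => ht.trans_le hx.1) (fun x hx => ?_) (fun x hx => ?_)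
      ⟨le_rfl, htc⟩ ⟨htc, le_rfl⟩ htc
    all_goals rw [interior_Icc] at hx
    · exact (hf x (ht.trans hx.1)).hasDerivWithinAt
    · exact nonpos_of_mul_nonneg_right (hsign x (ht.trans hx.1)) (sub_neg.2 hx.2)

lemma sub_one_mul_add_one_mul_log_sub_nonneg {t : ℝ} (ht : 0 < t) :
    0 ≤ (t - 1) * ((t + 1) * log t - 2 * (t - 1)) := by
  set g : ℝ → ℝ := fun x => (x + 1) * log x - 2 * (x - 1)
  have hderiv : ∀ x, 0 < x → HasDerivAt g (log x + (x + 1) / x - 2) x := fun x hx => by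
    refine ((((hasDerivAt_id' x).add_const 1).mul (hasDerivAt_log hx.ne')).sub
      (((hasDerivAt_id' x).sub_const 1).const_mul 2)).congr_deriv ?_
    field_simp
  have hg : MonotoneOn g (Set.Ioi 0) := by
    refine monotoneOn_of_hasDerivWithinAt_nonneg (convex_Ioi 0)
      (fun x hx => (hderiv x hx).continuousAt.continuousWithinAt)
      (fun x hx => (hderiv x (interior_subset hx)).hasDerivWithinAt) (fun x hx => ?_)
    rw [interior_Ioi] at hx
    have hx : 0 < x := hx
    have := one_sub_inv_le_log_of_pos hx
    rw [add_div, div_self hx.ne', one_div]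
    linarith
  have hg1 : g 1 = 0 := by simp [g]
  rcases le_total t 1 with h | h
  · exact mul_nonneg_of_nonpos_of_nonpos (by linarith) (hg1 ▸ hg ht (Set.mem_Ioi.2 one_pos) h)
  · exact mul_nonneg (by linarith) (hg1 ▸ hg (Set.mem_Ioi.2 one_pos) ht h)

lemma three_mul_sq_sub_one_le_mul_klFun {t : ℝ} (ht : 0 ≤ t) :
    3 * (t - 1) ^ 2 ≤ (2 * t + 4) * klFun t := by
  rcases ht.eq_or_lt with rfl | ht
  · norm_num [klFun_zero]
  set f : ℝ → ℝ := fun x => (2 * x + 4) * klFun x - 3 * (x - 1) ^ 2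
  have hderiv : ∀ x, 0 < x → HasDerivAt f (4 * ((x + 1) * log x - 2 * (x - 1))) x :=
    fun x hx => by
      refine ((((hasDerivAt_id' x).const_mul 2).add_const 4).mul (hasDerivAt_klFun hx.ne')).sub
        ((((hasDerivAt_id' x).sub_const 1).pow 2).const_mul 3) |>.congr_deriv ?_
      rw [klFun]; ring
  have := le_of_hasDerivAt_of_sub_mul_nonneg one_pos ht hderiv fun x hx => by
    nlinarith [sub_one_mul_add_one_mul_log_sub_nonneg hx]
  simp only [f, klFun_one] at this
  linarith

lemma three_mul_sq_sub_le_mul_mul_klFun {a b : ℝ} (ha : 0 ≤ a) (hb : 0 < b) :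
    3 * (a - b) ^ 2 ≤ (2 * a + 4 * b) * (b * klFun (a / b)) := by
  calc 3 * (a - b) ^ 2 = b ^ 2 * (3 * (a / b - 1) ^ 2) := by field_simp
    _ ≤ b ^ 2 * ((2 * (a / b) + 4) * klFun (a / b)) := by
      gcongr b ^ 2 * ?_; exact three_mul_sq_sub_one_le_mul_klFun (by positivity)
    _ = (2 * a + 4 * b) * (b * klFun (a / b)) := by field_simp

lemma mul_klFun_div {a b : ℝ} (hab : b = 0 → a = 0) :
    b * klFun (a / b) = a * log (a / b) + b - a := by
  rcases eq_or_ne b 0 with hb | hb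
  · simp [hb, hab hb]
  · rw [klFun]; field_simp

lemma dTV_sq_le_half_sum_mul_log {ι : Type*} [Fintype ι] {a b : ι → ℝ} (ha : IsDist a)
    (hb : IsDist b) (hab : ∀ i, b i = 0 → a i = 0) :
    dTV a b ^ 2 ≤ (∑ i, a i * log (a i / b i)) / 2 := by
  have hpointwise : ∀ i ∈ univ,
      |a i - b i| ^ 2 ≤ (2 * a i + 4 * b i) * (b i * klFun (a i / b i) / 3) := by
    intro i _
    rcases (hb.1 i).eq_or_lt with hbi | hbi
    · simp [← hbi, hab i hbi.symm]
    · rw [sq_abs, mul_div_assoc', le_div_iff₀ three_pos]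
      linarith [three_mul_sq_sub_le_mul_mul_klFun (ha.1 i) hbi]
  have hcs := sum_sq_le_sum_mul_sum_of_sq_le_mul univ
    (fun i _ => by linarith [ha.1 i, hb.1 i])
    (fun i _ => div_nonneg (mul_nonneg (hb.1 i) (klFun_nonneg (div_nonneg (ha.1 i) (hb.1 i))))
      three_pos.le)
    hpointwise
  simp only [← sum_div, mul_klFun_div (hab _), sum_add_distrib, sum_sub_distrib, ← mul_sum,
    ha.2, hb.2] at hcs
  rw [dTV]
  linarith

lemma dTV_nonneg {α : Type*} [Fintype α] (p q : α → ℝ) : 0 ≤ dTV p q := by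
  unfold dTV; positivity

lemma mutualInfo_eq_sum_mul_log {α β : Type*} [Fintype α] [Fintype β] (j : α × β → ℝ) :
    mutualInfo j = ∑ p, j p * log (j p / ((∑ b, j (p.1, b)) * ∑ a, j (a, p.2))) :=
  sum_congr rfl fun p _ => by split_ifs with h <;> simp [h]

lemma isDist_mul_marginals {α β : Type*} [Fintype α] [Fintype β] {j : α × β → ℝ}
    (hj : IsDist j) : IsDist fun p : α × β => (∑ b, j (p.1, b)) * ∑ a, j (a, p.2) := by
  refine ⟨fun p => mul_nonneg (sum_nonneg fun _ _ => hj.1 _) (sum_nonneg fun _ _ => hj.1 _), ?_⟩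
  have hfst : ∑ a, ∑ b, j (a, b) = 1 := by rw [← Fintype.sum_prod_type, hj.2]
  have hsnd : ∑ b, ∑ a, j (a, b) = 1 := by rw [sum_comm, hfst]
  simp only [Fintype.sum_prod_type, ← sum_mul_sum, hfst, hsnd, one_mul]

theorem dTV_le_sqrt_mutualInfo {α β : Type*} [Fintype α] [Fintype β] {j : α × β → ℝ}
    (hj : IsDist j) :
    dTV j (fun p => (∑ b, j (p.1, b)) * ∑ a, j (a, p.2)) ≤ √(mutualInfo j / 2) := by
  have hac : ∀ p : α × β, (∑ b, j (p.1, b)) * (∑ a, j (a, p.2)) = 0 → j p = 0 := by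
    intro p hp
    rcases mul_eq_zero.1 hp with h | h
    · exact (sum_eq_zero_iff_of_nonneg fun b _ => hj.1 _).1 h p.2 (mem_univ _)
    · exact (sum_eq_zero_iff_of_nonneg fun a _ => hj.1 _).1 h p.1 (mem_univ _)
  refine (le_abs_self _).trans (Real.abs_le_sqrt ?_)
  rw [mutualInfo_eq_sum_mul_log]
  exact dTV_sq_le_half_sum_mul_log hj (isDist_mul_marginals hj) hac

lemma dTV_eq_sum_mul_dTV_cond {α β : Type*} [Fintype α] [Fintype β] {j : α × β → ℝ}
    (hj : ∀ p, 0 ≤ j p) (q : β → ℝ) :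
    dTV j (fun p => (∑ b, j (p.1, b)) * q p.2) =
      ∑ a, (∑ b, j (a, b)) * dTV (fun b => j (a, b) / ∑ b', j (a, b')) q := by
  simp only [dTV, Fintype.sum_prod_type, mul_sum, mul_left_comm _ (1 / 2 : ℝ)]
  refine sum_congr rfl fun a _ => sum_congr rfl fun b _ => ?_
  rcases (sum_nonneg fun b _ => hj (a, b) : 0 ≤ ∑ b, j (a, b)).eq_or_lt with hm | hm
  · have hjab := (sum_eq_zero_iff_of_nonneg fun b _ => hj (a, b)).1 hm.symm b (mem_univ _)
    simp [← hm, hjab]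
  · rw [← abs_of_pos hm, ← abs_mul, abs_of_pos hm, mul_sub, mul_div_cancel₀ _ hm.ne']

lemma dTV_sum_mul_kernel_le {α β γ : Type*} [Fintype α] [Fintype β] [Fintype γ]
    (p q : α × β → ℝ) {K : β → γ → ℝ} (hK : ∀ b c, 0 ≤ K b c)
    (hK1 : ∀ b, ∑ c, K b c ≤ 1) :
    dTV (fun x : α × γ => ∑ b, p (x.1, b) * K b x.2) (fun x => ∑ b, q (x.1, b) * K b x.2) ≤
      dTV p q := by
  unfold dTV
  gcongr 1 / 2 * ?_
  simp only [Fintype.sum_prod_type]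
  refine sum_le_sum fun a _ => ?_
  calc ∑ c, |∑ b, p (a, b) * K b c - ∑ b, q (a, b) * K b c|
      ≤ ∑ c, ∑ b, |p (a, b) - q (a, b)| * K b c := by
        refine sum_le_sum fun c _ => ?_
        rw [← sum_sub_distrib]
        refine (abs_sum_le_sum_abs _ _).trans_eq (sum_congr rfl fun b _ => ?_)
        rw [← sub_mul, abs_mul, abs_of_nonneg (hK b c)]
    _ = ∑ b, |p (a, b) - q (a, b)| * ∑ c, K b c := by rw [sum_comm]; simp only [mul_sum]
    _ ≤ ∑ b, |p (a, b) - q (a, b)| :=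
        sum_le_sum fun b _ => mul_le_of_le_one_right (abs_nonneg _) (hK1 b)

section CondDist

variable {β γ : Type*} [Fintype γ] {r : β × γ → ℝ}

/-- Where the marginal `∑ c', r (b, c')` vanishes this is `0`, so `condDist r` is only a
sub-Markov kernel. -/
noncomputable def condDist (r : β × γ → ℝ) (b : β) (c : γ) : ℝ :=
  r (b, c) / ∑ c', r (b, c')

lemma condDist_nonneg (hr : ∀ i, 0 ≤ r i) (b : β) (c : γ) : 0 ≤ condDist r b c :=
  div_nonneg (hr _) (sum_nonneg fun _ _ => hr _)

lemma sum_condDist_le_one (b : β) : ∑ c, condDist r b c ≤ 1 := by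
  simp only [condDist, ← sum_div]
  exact div_self_le_one _

lemma sum_mul_condDist (hr : ∀ i, 0 ≤ r i) (b : β) (c : γ) :
    (∑ c', r (b, c')) * condDist r b c = r (b, c) := by
  rw [condDist, mul_div_assoc', mul_div_cancel_left_of_imp fun h =>
    (sum_eq_zero_iff_of_nonneg fun c' _ => hr (b, c')).1 h c (mem_univ _)]

end CondDist

lemma IsDist.marginal_fst_thd {S X V : Type*} [Fintype S] [Fintype X] [Fintype V]
    {p : S × X × V → ℝ} (hp : IsDist p) :
    IsDist fun sv : S × V => ∑ x, p (sv.1, x, sv.2) :=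
  ⟨fun _ => sum_nonneg fun _ _ => hp.1 _, by
    simp only [Fintype.sum_prod_type, ← hp.2]
    exact sum_congr rfl fun s _ => sum_comm⟩

lemma eq_mul_condDist_of_condIndep {S X V : Type*} [Fintype S] [Fintype X]
    {p : S × X × V → ℝ} (hp : ∀ i, 0 ≤ p i)
    (hci : ∀ s x v, (∑ s', ∑ x', p (s', x', v)) ≠ 0 →
      p (s, x, v) * (∑ s', ∑ x', p (s', x', v)) =
        (∑ x', p (s, x', v)) * (∑ s', p (s', x, v))) (s : S) (x : X) (v : V) :
    p (s, x, v) =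
      (∑ x', p (s, x', v)) * condDist (fun vx : V × X => ∑ s', p (s', vx.2, vx.1)) v x := by
  rw [condDist, sum_comm, mul_div_assoc']
  rcases eq_or_ne (∑ s', ∑ x', p (s', x', v)) 0 with hv | hv
  · rw [hv, div_zero]
    exact (sum_eq_zero_iff_of_nonneg fun x' _ => hp _).1
      ((sum_eq_zero_iff_of_nonneg fun s' _ => sum_nonneg fun x' _ => hp _).1 hv s (mem_univ _))
      x (mem_univ _)
  · rw [eq_div_iff hv, hci s x v hv]

/-- If `(S, X, V)` are jointly distributed with `S` and `X` conditionally independent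
given `V`, then `dTV((S,X), S ⊗ X) ≤ E_{s∼S}[dTV(V | S=s, V)] ≤ √(I(S;V)/2)`. -/
theorem stmt_13 {S X V : Type*} [Fintype S] [Fintype X] [Fintype V]
    (p : S × X × V → ℝ) (hp : IsDist p)
    (hci : ∀ s x v, (∑ s', ∑ x', p (s', x', v)) ≠ 0 →
      p (s, x, v) * (∑ s', ∑ x', p (s', x', v)) =
        (∑ x', p (s, x', v)) * (∑ s', p (s', x, v))) :
    dTV (fun sx : S × X => ∑ v, p (sx.1, sx.2, v))
        (fun sx : S × X => (∑ x, ∑ v, p (sx.1, x, v)) * (∑ s, ∑ v, p (s, sx.2, v))) ≤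
      ∑ s, (∑ x, ∑ v, p (s, x, v)) *
        dTV (fun v => (∑ x, p (s, x, v)) / ∑ x, ∑ v', p (s, x, v'))
            (fun v => ∑ s', ∑ x, p (s', x, v)) ∧
    ∑ s, (∑ x, ∑ v, p (s, x, v)) *
        dTV (fun v => (∑ x, p (s, x, v)) / ∑ x, ∑ v', p (s, x, v'))
            (fun v => ∑ s', ∑ x, p (s', x, v)) ≤
      Real.sqrt (mutualInfo (fun sv : S × V => ∑ x, p (sv.1, x, sv.2)) / 2) := by
  set j : S × V → ℝ := fun sv => ∑ x, p (sv.1, x, sv.2)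
  set r : V × X → ℝ := fun vx => ∑ s, p (s, vx.2, vx.1)
  have hj : IsDist j := hp.marginal_fst_thd
  have hr : ∀ i, 0 ≤ r i := fun _ => sum_nonneg fun _ _ => hp.1 _
  have hmS : ∀ s, ∑ v, j (s, v) = ∑ x, ∑ v, p (s, x, v) := fun s => sum_comm
  have hmV : ∀ v, ∑ s, j (s, v) = ∑ x, r (v, x) := fun v => sum_comm
  have hchain : dTV j (fun sv => (∑ v, j (sv.1, v)) * ∑ s, j (s, sv.2)) =
      ∑ s, (∑ x, ∑ v, p (s, x, v)) *
        dTV (fun v => (∑ x, p (s, x, v)) / ∑ x, ∑ v', p (s, x, v'))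
          (fun v => ∑ s', ∑ x, p (s', x, v)) := by
    rw [dTV_eq_sum_mul_dTV_cond hj.1 fun v => ∑ s, j (s, v)]
    simp only [hmS]
    rfl
  refine ⟨le_of_le_of_eq ?_ hchain, hchain ▸ dTV_le_sqrt_mutualInfo hj⟩
  convert dTV_sum_mul_kernel_le j _ (condDist_nonneg hr) (sum_condDist_le_one (r := r))
    using 2
  · ext ⟨s, x⟩
    exact sum_congr rfl fun v _ => eq_mul_condDist_of_condIndep hp.1 hci s x v
  · ext ⟨s, x⟩
    simp only [mul_assoc, ← mul_sum, hmS, hmV, sum_mul_condDist hr]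
    exact congrArg _ sum_comm
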